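/- arXiv:2503.06379 — 2 statements merged into one kernel-verified Lean document; each statement's English description precedes it below -/
import Mathlib

section
/- Let G be a finite group and p a prime. Then χ_p(G) = χ(C_p(G))/|G|_{p'} ≡ 1 (mod p). -/
open scoped Classical in
/-- The Euler characteristic of (the order complex of) a finite poset `P`:
`χ(P) = Σ_{i ≥ 0} (-1)^i c_i` where `c_i` is the number of chains in `P` with
exactly `i + 1` elements; a chain with `i + 1` elements contributes `(-1)^i = (-1)^(card+1)`. -/
noncomputable def posetEulerChar (P : Type*) [PartialOrder P] [Finite P] : ℤ :=
  letI := Fintype.ofFinite P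
  ∑ s ∈ (Finset.univ : Finset P).powerset,
    if s.Nonempty ∧ IsChain (· ≤ ·) (s : Set P) then (-1 : ℤ) ^ (s.card + 1) else 0

/-- `μ` is the Möbius function of the poset `P`: `μ(x,x) = 1` and
`Σ_{x ≤ z ≤ y} μ(x,z) = 0` for all `x < y`. -/
def IsMobiusOf {P : Type*} [PartialOrder P] (μ : P → P → ℤ) : Prop :=
  (∀ x, μ x x = 1) ∧ ∀ x y : P, x < y → (∑ᶠ z ∈ Set.Icc x y, μ x z) = 0

/-- The coset poset `C_p(G)`: all right cosets `Hx` (as subsets of `G`, ordered by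
inclusion) where `H` ranges over the `p`-subgroups of `G` (including the trivial one). -/
def pCosets (p : ℕ) (G : Type*) [Group G] : Set (Set G) :=
  {S | ∃ (H : Subgroup G) (x : G), IsPGroup p H ∧ S = (fun h => h * x) '' (H : Set G)}

/-! Sending a chain of cosets `H₀x ⊂ ⋯ ⊂ Hₖx` to the chain `H₀ < ⋯ < Hₖ` of their stabilizers
preserves its length, and the fibre over a chain of `p`-subgroups consists of the chains
`H₀g ⊂ ⋯ ⊂ Hₖg`, one for each right coset of the bottom subgroup `H₀`; it has `[G : H₀]` elements.
So `χ(C_p(G))` is the sum of `(-1)^k [G : H₀]` over chains of `p`-subgroups, and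
`[G : H₀] = |G|_{p'} · p^a` with `a = 0` exactly when `H₀` is a Sylow subgroup, which then forces
the chain to be `{H₀}`. Modulo `p` the quotient by `|G|_{p'}` is therefore the number of Sylow
`p`-subgroups, which is `≡ 1 (mod p)`. -/

open scoped Classical Pointwise Finset
open MulOpposite MulAction

lemma IsChain.finset_inf_mem {α : Type*} [SemilatticeInf α] [OrderTop α] {s : Finset α}
    (hne : s.Nonempty) (hs : IsChain (· ≤ ·) (s : Set α)) : s.inf id ∈ s := by
  rw [← Finset.inf'_eq_inf hne]
  refine Finset.inf'_mem _ (fun x hx y hy => ?_) _ hne _ fun x hx => hx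
  rcases eq_or_ne x y with rfl | hxy
  · rwa [inf_idem]
  · rcases hs hx hy hxy with h | h
    · rwa [inf_of_le_left h]
    · rwa [inf_of_le_right h]

section NonemptyChains

variable {α : Type*} [PartialOrder α] [Fintype α]

noncomputable def nonemptyChains (A : Set α) : Finset (Finset α) :=
  {s ∈ A.toFinset.powerset | s.Nonempty ∧ IsChain (· ≤ ·) (s : Set α)}

lemma mem_nonemptyChains {A : Set α} {s : Finset α} :
    s ∈ nonemptyChains A ↔ (∀ a ∈ s, a ∈ A) ∧ s.Nonempty ∧ IsChain (· ≤ ·) (s : Set α) := by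
  simp [nonemptyChains, Finset.subset_iff]

lemma posetEulerChar_eq_sum_nonemptyChains (A : Set α) :
    posetEulerChar A = ∑ s ∈ nonemptyChains A, (-1 : ℤ) ^ (s.card + 1) := by
  rw [posetEulerChar, nonemptyChains, Finset.sum_filter]
  refine Finset.sum_nbij' (·.map (Function.Embedding.subtype _)) (·.subtype (· ∈ A))
    (fun s _ => by simp +contextual [Finset.subset_iff]) (fun u _ => by simp)
    (fun s _ => by ext; simp) (fun u hu => ?_) (fun s _ => ?_)
  · rw [Finset.subtype_map]
    exact Finset.filter_true_of_mem fun x hx => by simpa using Finset.mem_powerset.mp hu hx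
  · have : IsChain (· ≤ ·) (Subtype.val '' (s : Set A)) ↔ IsChain (· ≤ ·) (s : Set A) :=
      IsChain.image_embedding_iff (φ := OrderEmbedding.subtype (· ∈ A))
    simp [this]

end NonemptyChains

lemma inf_mem_of_mem_nonemptyChains {α : Type*} [Lattice α] [OrderTop α] [Fintype α] {A : Set α}
    {s : Finset α} (hs : s ∈ nonemptyChains A) : s.inf id ∈ A := by
  obtain ⟨hA, hne, hch⟩ := mem_nonemptyChains.mp hs
  exact hA _ (hch.finset_inf_mem hne)

section RightCosets

variable {G : Type*} [Group G]

lemma image_mul_right_eq_op_smul (H : Subgroup G) (x : G) :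
    (fun h => h * x) '' (H : Set G) = op x • (H : Set G) := rfl

lemma stabilizer_op_smul_coe (H : Subgroup G) (x : G) :
    stabilizer G (op x • (H : Set G)) = H := by
  rw [stabilizer_smul_eq_right, stabilizer_subgroup]

lemma op_smul_coe_eq_of_mem {H : Subgroup G} {x y : G} (h : x ∈ op y • (H : Set G)) :
    op x • (H : Set G) = op y • (H : Set G) := by
  rw [rightCoset_eq_iff, ← inv_mem_iff, mul_inv_rev, inv_inv]
  rwa [mem_rightCoset_iff] at h

end RightCosets

section PCosets

variable {G : Type*} [Group G] {p : ℕ} {S S' : Set G}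

lemma op_smul_coe_mem_pCosets {H : Subgroup G} (hH : IsPGroup p H) (x : G) :
    op x • (H : Set G) ∈ pCosets p G :=
  ⟨H, x, hH, rfl⟩

lemma nonempty_of_mem_pCosets (hS : S ∈ pCosets p G) : S.Nonempty := by
  obtain ⟨H, x, -, rfl⟩ := hS
  exact ⟨x, mem_own_rightCoset H.toSubmonoid x⟩

lemma isPGroup_stabilizer_of_mem_pCosets (hS : S ∈ pCosets p G) :
    IsPGroup p (stabilizer G S) := by
  obtain ⟨H, x, hH, rfl⟩ := hS
  rwa [image_mul_right_eq_op_smul, stabilizer_op_smul_coe]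

lemma eq_op_smul_stabilizer_of_mem_pCosets (hS : S ∈ pCosets p G) {x : G} (hx : x ∈ S) :
    S = op x • (stabilizer G S : Set G) := by
  obtain ⟨H, y, -, rfl⟩ := hS
  rw [image_mul_right_eq_op_smul] at hx ⊢
  rw [stabilizer_op_smul_coe, op_smul_coe_eq_of_mem hx]

lemma stabilizer_mono_of_mem_pCosets (hS : S ∈ pCosets p G) (hS' : S' ∈ pCosets p G)
    (h : S ⊆ S') : stabilizer G S ≤ stabilizer G S' := by
  obtain ⟨x, hx⟩ := nonempty_of_mem_pCosets hS
  have hS'x := eq_op_smul_stabilizer_of_mem_pCosets hS' (h hx)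
  rw [eq_op_smul_stabilizer_of_mem_pCosets hS hx, hS'x] at h
  exact Set.smul_set_subset_smul_set_iff.mp h

lemma eq_of_subset_of_stabilizer_eq (hS : S ∈ pCosets p G) (hS' : S' ∈ pCosets p G)
    (h : S ⊆ S') (heq : stabilizer G S = stabilizer G S') : S = S' := by
  obtain ⟨x, hx⟩ := nonempty_of_mem_pCosets hS
  rw [eq_op_smul_stabilizer_of_mem_pCosets hS hx,
    eq_op_smul_stabilizer_of_mem_pCosets hS' (h hx), heq]

end PCosets

section CosetChains

variable {G : Type*} [Group G] {p : ℕ}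

noncomputable def subgroupChain (s : Finset (Set G)) : Finset (Subgroup G) :=
  s.image (stabilizer G)

noncomputable def cosetChain (t : Finset (Subgroup G)) (g : G) : Finset (Set G) :=
  t.image fun H : Subgroup G => op g • (H : Set G)

lemma subgroupChain_cosetChain (t : Finset (Subgroup G)) (g : G) :
    subgroupChain (cosetChain t g) = t := by
  simp [subgroupChain, cosetChain, Finset.image_image, Function.comp_def]

lemma cosetChain_eq_cosetChain_iff {t : Finset (Subgroup G)} {H₀ : Subgroup G} (hH₀ : H₀ ∈ t)
    (hmin : ∀ H ∈ t, H₀ ≤ H) {g g' : G} :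
    cosetChain t g' = cosetChain t g ↔ g' ∈ op g • (H₀ : Set G) := by
  constructor
  · intro h
    have : op g' • (H₀ : Set G) ∈ cosetChain t g := h ▸ Finset.mem_image_of_mem _ hH₀
    obtain ⟨K, -, hK⟩ := Finset.mem_image.mp this
    have hKH₀ : K = H₀ := by
      simpa only [stabilizer_op_smul_coe] using congrArg (stabilizer G) hK
    rw [← hKH₀, hK]
    exact mem_own_rightCoset H₀.toSubmonoid g'
  · intro hg'
    refine Finset.image_congr fun H hH => op_smul_coe_eq_of_mem ?_
    exact Set.smul_set_mono (hmin H hH) hg'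

variable [Fintype G]

lemma cosetChain_mem_nonemptyChains {t : Finset (Subgroup G)}
    (ht : t ∈ nonemptyChains {H : Subgroup G | IsPGroup p H}) (g : G) :
    cosetChain t g ∈ nonemptyChains (pCosets p G) := by
  obtain ⟨hmem, hne, hch⟩ := mem_nonemptyChains.mp ht
  refine mem_nonemptyChains.mpr ⟨?_, hne.image _, ?_⟩
  · simp only [cosetChain, Finset.mem_image, forall_exists_index, and_imp]
    rintro _ H hH rfl
    exact op_smul_coe_mem_pCosets (hmem H hH) g
  · rw [cosetChain, Finset.coe_image]
    exact hch.image_of_map_rel _ _ _ fun H K hHK => Set.smul_set_mono hHK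

lemma subgroupChain_mem_nonemptyChains {s : Finset (Set G)}
    (hs : s ∈ nonemptyChains (pCosets p G)) :
    subgroupChain s ∈ nonemptyChains {H : Subgroup G | IsPGroup p H} := by
  obtain ⟨hmem, hne, hch⟩ := mem_nonemptyChains.mp hs
  refine mem_nonemptyChains.mpr ⟨?_, hne.image _, ?_⟩
  · simp only [subgroupChain, Finset.mem_image, forall_exists_index, and_imp]
    rintro _ S hS rfl
    exact isPGroup_stabilizer_of_mem_pCosets (hmem S hS)
  · rw [subgroupChain, Finset.coe_image]
    rintro _ ⟨S, hS, rfl⟩ _ ⟨S', hS', rfl⟩ hne'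
    exact (hch hS hS' (ne_of_apply_ne _ hne')).imp
      (stabilizer_mono_of_mem_pCosets (hmem S hS) (hmem S' hS'))
      (stabilizer_mono_of_mem_pCosets (hmem S' hS') (hmem S hS))

lemma card_subgroupChain {s : Finset (Set G)} (hs : s ∈ nonemptyChains (pCosets p G)) :
    (subgroupChain s).card = s.card := by
  obtain ⟨hmem, -, hch⟩ := mem_nonemptyChains.mp hs
  refine Finset.card_image_of_injOn fun S hS S' hS' heq => ?_
  by_contra hne
  rcases hch hS hS' hne with h | h
  · exact hne (eq_of_subset_of_stabilizer_eq (hmem S hS) (hmem S' hS') h heq)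
  · exact hne (eq_of_subset_of_stabilizer_eq (hmem S' hS') (hmem S hS) h heq.symm).symm

lemma eq_cosetChain_subgroupChain {s : Finset (Set G)} (hs : s ∈ nonemptyChains (pCosets p G))
    {x : G} (hx : ∀ S ∈ s, x ∈ S) : s = cosetChain (subgroupChain s) x := by
  obtain ⟨hmem, -, -⟩ := mem_nonemptyChains.mp hs
  rw [cosetChain, subgroupChain, Finset.image_image]
  nth_rw 1 [← Finset.image_id (s := s)]
  exact Finset.image_congr fun S hS => eq_op_smul_stabilizer_of_mem_pCosets (hmem S hS) (hx S hS)

lemma exists_forall_mem_of_mem_nonemptyChains {s : Finset (Set G)}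
    (hs : s ∈ nonemptyChains (pCosets p G)) : ∃ x, ∀ S ∈ s, x ∈ S := by
  obtain ⟨hmem, hne, hch⟩ := mem_nonemptyChains.mp hs
  obtain ⟨x, hx⟩ := nonempty_of_mem_pCosets (hmem _ (hch.finset_inf_mem hne))
  exact ⟨x, fun S hS => Finset.inf_le (f := id) hS hx⟩

lemma card_filter_subgroupChain_eq {t : Finset (Subgroup G)}
    (ht : t ∈ nonemptyChains {H : Subgroup G | IsPGroup p H}) :
    #{s ∈ nonemptyChains (pCosets p G) | subgroupChain s = t} = (t.inf id).index := by
  obtain ⟨-, hne, hch⟩ := mem_nonemptyChains.mp ht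
  set H₀ := t.inf id
  have hfiber : {s ∈ nonemptyChains (pCosets p G) | subgroupChain s = t} =
      Finset.univ.image (cosetChain t) := by
    ext s
    simp only [Finset.mem_filter, Finset.mem_image, Finset.mem_univ, true_and]
    constructor
    · rintro ⟨hs, rfl⟩
      obtain ⟨x, hx⟩ := exists_forall_mem_of_mem_nonemptyChains hs
      exact ⟨x, (eq_cosetChain_subgroupChain hs hx).symm⟩
    · rintro ⟨g, rfl⟩
      exact ⟨cosetChain_mem_nonemptyChains ht g, subgroupChain_cosetChain t g⟩
  have hcard : ∀ g, #{g' | cosetChain t g' = cosetChain t g} = Nat.card H₀ := fun g => by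
    simp_rw [cosetChain_eq_cosetChain_iff (hch.finset_inf_mem hne) fun H hH => Finset.inf_le hH]
    rw [← Fintype.card_subtype, ← Nat.card_eq_fintype_card]
    exact Set.natCard_smul_set _ _
  have hcard_G : Nat.card G = #(Finset.univ.image (cosetChain t)) * Nat.card H₀ := by
    rw [Nat.card_eq_fintype_card, ← Finset.card_univ,
      Finset.card_eq_sum_card_image (cosetChain t), Finset.sum_const_nat]
    rintro _ hs
    obtain ⟨g, -, rfl⟩ := Finset.mem_image.mp hs
    exact hcard g
  rw [hfiber]
  exact Nat.eq_of_mul_eq_mul_right Nat.card_pos (H₀.index_mul_card.trans hcard_G).symm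

end CosetChains

lemma posetEulerChar_pCosets_eq_sum {G : Type*} [Group G] [Fintype G] (p : ℕ) :
    posetEulerChar (pCosets p G) = ∑ t ∈ nonemptyChains {H : Subgroup G | IsPGroup p H},
      (-1 : ℤ) ^ (t.card + 1) * (t.inf id).index := by
  rw [posetEulerChar_eq_sum_nonemptyChains,
    ← Finset.sum_fiberwise_of_maps_to fun s hs => subgroupChain_mem_nonemptyChains hs]
  refine Finset.sum_congr rfl fun t ht => ?_
  have hcard : ∀ s ∈ {s ∈ nonemptyChains (pCosets p G) | subgroupChain s = t},
      (-1 : ℤ) ^ (s.card + 1) = (-1) ^ (t.card + 1) := by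
    intro s hst
    obtain ⟨hs, rfl⟩ := Finset.mem_filter.mp hst
    rw [card_subgroupChain hs]
  rw [Finset.sum_congr rfl hcard, Finset.sum_const, card_filter_subgroupChain_eq ht, nsmul_eq_mul,
    mul_comm]

lemma IsPGroup.index_eq_ordCompl_mul_pow {G : Type*} [Group G] [Finite G] {p : ℕ} (hp : p.Prime)
    {H : Subgroup G} (hH : IsPGroup p H) :
    H.index = ordCompl[p] (Nat.card G) * p ^ H.index.factorization p := by
  have := Fact.mk hp
  obtain ⟨k, hk⟩ := IsPGroup.iff_card.mp hH
  rw [← H.index_mul_card, hk, Nat.ordCompl_mul, Nat.ordCompl_self_pow hp, mul_one, mul_comm]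
  exact (Nat.ordProj_mul_ordCompl_eq_self _ _).symm

section NormalizedEulerChar

variable {G : Type*} [Group G] [Fintype G] {p : ℕ}

/-- The paper's `χ_p(G) = χ(C_p(G)) / |G|_{p'}`. -/
noncomputable def normalizedEulerChar (p : ℕ) (G : Type*) [Group G] [Fintype G] : ℤ :=
  ∑ t ∈ nonemptyChains {H : Subgroup G | IsPGroup p H},
    (-1 : ℤ) ^ (t.card + 1) * (p : ℤ) ^ (t.inf id).index.factorization p

lemma posetEulerChar_pCosets_eq_ordCompl_mul (hp : p.Prime) :
    posetEulerChar (pCosets p G) =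
      ((ordCompl[p] (Fintype.card G) : ℕ) : ℤ) * normalizedEulerChar p G := by
  rw [posetEulerChar_pCosets_eq_sum, normalizedEulerChar, Finset.mul_sum]
  refine Finset.sum_congr rfl fun t ht => ?_
  conv_lhs => rw [(inf_mem_of_mem_nonemptyChains ht).index_eq_ordCompl_mul_pow hp]
  rw [Nat.card_eq_fintype_card, Nat.cast_mul, Nat.cast_pow]
  ring

lemma eq_singleton_inf_of_not_dvd_index (hp : p.Prime) {t : Finset (Subgroup G)}
    (ht : t ∈ nonemptyChains {H : Subgroup G | IsPGroup p H}) (hdvd : ¬ p ∣ (t.inf id).index) :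
    t = {t.inf id} := by
  have := Fact.mk hp
  obtain ⟨hpt, hne, hch⟩ := mem_nonemptyChains.mp ht
  refine Finset.eq_singleton_iff_unique_mem.mpr ⟨hch.finset_inf_mem hne, fun K hK => ?_⟩
  exact ((inf_mem_of_mem_nonemptyChains ht).toSylow hdvd).is_maximal' (hpt K hK)
    (Finset.inf_le hK)

lemma cast_normalizedEulerChar_eq_card_sylow (hp : p.Prime) :
    (normalizedEulerChar p G : ZMod p) = Nat.card (Sylow p G) := by
  have := Fact.mk hp
  let sylowChains : Finset (Finset (Subgroup G)) :=
    Finset.univ.image fun P : Sylow p G => {(P : Subgroup G)}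
  have hsub : sylowChains ⊆ nonemptyChains {H : Subgroup G | IsPGroup p H} := by
    intro t ht
    obtain ⟨P, -, rfl⟩ := Finset.mem_image.mp ht
    exact mem_nonemptyChains.mpr ⟨by simpa using P.isPGroup', by simp, by simp⟩
  have hzero : ∀ t ∈ nonemptyChains {H : Subgroup G | IsPGroup p H}, t ∉ sylowChains →
      (-1 : ZMod p) ^ (t.card + 1) * (p : ZMod p) ^ (t.inf id).index.factorization p = 0 := by
    intro t ht hts
    have hdvd : p ∣ (t.inf id).index := by
      by_contra hdvd
      refine hts (Finset.mem_image.mpr ⟨(inf_mem_of_mem_nonemptyChains ht).toSylow hdvd,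
        Finset.mem_univ _, ?_⟩)
      exact (eq_singleton_inf_of_not_dvd_index hp ht hdvd).symm
    rw [ZMod.natCast_self, zero_pow, mul_zero]
    exact (hp.factorization_pos_of_dvd Subgroup.index_ne_zero_of_finite hdvd).ne'
  have hone : ∀ P : Sylow p G, (-1 : ZMod p) ^ (({(P : Subgroup G)} : Finset _).card + 1) *
      (p : ZMod p) ^ (({(P : Subgroup G)} : Finset _).inf id).index.factorization p = 1 := by
    intro P
    simp [Nat.factorization_eq_zero_of_not_dvd P.not_dvd_index]
  rw [normalizedEulerChar]
  push_cast
  rw [← Finset.sum_subset hsub hzero,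
    Finset.sum_image fun P _ Q _ h => Sylow.ext (Finset.singleton_inj.mp h),
    Finset.sum_congr rfl fun P _ => hone P]
  simp

lemma normalizedEulerChar_modEq_one (hp : p.Prime) : normalizedEulerChar p G ≡ 1 [ZMOD p] := by
  have := Fact.mk hp
  rw [← ZMod.intCast_eq_intCast_iff, cast_normalizedEulerChar_eq_card_sylow hp, Int.cast_one]
  exact_mod_cast (ZMod.natCast_eq_natCast_iff _ _ _).mpr (card_sylow_modEq_one p G)

end NormalizedEulerChar

/-- For every finite group `G` and prime `p`, `χ_p(G) = χ(C_p(G))/|G|_{p'} ≡ 1 (mod p)`. -/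
theorem euler_char_pCosets_div_ordCompl_modEq_one {G : Type*} [Group G] [Fintype G]
    {p : ℕ} (hp : p.Prime) :
    ∃ χp : ℤ,
      posetEulerChar ↥(pCosets p G) = ((ordCompl[p] (Fintype.card G) : ℕ) : ℤ) * χp ∧
      χp ≡ 1 [ZMOD (p : ℤ)] :=
  ⟨normalizedEulerChar p G, posetEulerChar_pCosets_eq_ordCompl_mul hp,
    normalizedEulerChar_modEq_one hp⟩
end

section
/- Let G be a finite p-TI-group for a prime p, and let s be the number of Sylow p-subgroups of G. Then χ(C_p(G)) = s·|G|_{p'} - (s-1)·|G|. -/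
/-- `G` is a `p`-TI-group: for every Sylow `p`-subgroup `P` of `G` and every `g : G`,
either `P ∩ P^g = 1` or `P^g = P` (where `P^g` is the conjugate of `P` by `g`). -/
def IsPTIGroup (p : ℕ) (G : Type*) [Group G] : Prop :=
  ∀ (P : Sylow p G) (g : G),
    (P : Subgroup G) ⊓ (P : Subgroup G).map (MulAut.conj g).toMonoidHom = ⊥ ∨
      (P : Subgroup G).map (MulAut.conj g).toMonoidHom = (P : Subgroup G)

/-!
Grouping the chains of a finite poset by their least element gives
`χ(P) = Σ_a (1 - χ(P_{>a}))`. In `C_p(G)` the cosets strictly above `Hx` are covered by the cones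
below the Sylow cosets `Qx` with `H < Q`; since a nontrivial `p`-subgroup of a `p`-TI-group lies in
a unique Sylow subgroup, these cones are pairwise incomparable, and each has a top element, so
`χ(P_{>Hx}) = #{Q | H < Q}`. Summing, `1 - #{Q | H < Q}` is `(1 - #{Q | H ≤ Q}) + [H is Sylow]`:
the first term vanishes unless `H = 1`, where it is `1 - s`, and the second counts the
`s·|G|_{p'}` right cosets of Sylow subgroups.
-/

open scoped Classical Pointwise
open Finset MulOpposite

namespace Finset
variable {α : Type*} [PartialOrder α]

noncomputable def chains (D : Finset α) : Finset (Finset α) :=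
  D.powerset.filter fun σ => IsChain (· ≤ ·) (σ : Set α)

@[simp]
theorem mem_chains {D σ : Finset α} : σ ∈ D.chains ↔ σ ⊆ D ∧ IsChain (· ≤ ·) (σ : Set α) := by
  rw [chains, mem_filter, mem_powerset]

noncomputable def chainEulerChar (D : Finset α) : ℤ :=
  ∑ σ ∈ D.chains with σ.Nonempty, (-1) ^ (σ.card + 1)

theorem exists_isLeast_of_isChain {σ : Finset α} (hne : σ.Nonempty)
    (hσ : IsChain (· ≤ ·) (σ : Set α)) : ∃ a, IsLeast (σ : Set α) a := by
  obtain ⟨m, hm⟩ := σ.exists_minimal hne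
  exact ⟨m, hm.prop, fun b hb => (hσ.total hm.prop hb).elim id fun hbm => hm.le_of_le hb hbm⟩

theorem sum_chains_neg_one_pow (D : Finset α) :
    ∑ σ ∈ D.chains, (-1 : ℤ) ^ σ.card = 1 - chainEulerChar D := by
  have hempty : ∅ ∈ D.chains := by simp
  rw [chainEulerChar, sum_filter, eq_sub_iff_add_eq, ← sum_add_distrib,
    sum_eq_single_of_mem ∅ hempty fun σ _ hσ => by simp [nonempty_iff_ne_empty.2 hσ, pow_succ]]
  simp

theorem chainEulerChar_eq_one_of_isGreatest {D : Finset α} {t : α}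
    (ht : IsGreatest (D : Set α) t) : chainEulerChar D = 1 := by
  suffices ∑ σ ∈ D.chains, (-1 : ℤ) ^ σ.card = 0 by linarith [sum_chains_neg_one_pow D]
  -- toggling `t` is a sign-reversing involution on the chains of `D`
  refine sum_involution (fun σ _ => if t ∈ σ then σ.erase t else insert t σ) ?_ ?_ ?_ ?_
  · intro σ _
    split_ifs with h
    · rw [← card_erase_add_one h, pow_succ]; ring
    · rw [card_insert_of_notMem h, pow_succ]; ring
  · intro σ _ _
    split_ifs with h
    · exact fun he => notMem_erase t σ (by rwa [he])
    · exact fun he => h (he ▸ mem_insert_self t σ)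
  · intro σ hσ
    rw [mem_chains] at hσ ⊢
    split_ifs with h
    · exact ⟨(erase_subset t σ).trans hσ.1, hσ.2.mono (by simp)⟩
    · refine ⟨insert_subset ht.1 hσ.1, ?_⟩
      rw [coe_insert]
      exact hσ.2.insert fun b hb _ => Or.inr (ht.2 (hσ.1 hb))
  · intro σ _
    by_cases h : t ∈ σ <;> simp [h]

theorem chainEulerChar_biUnion [DecidableEq α] {ι : Type*} {s : Finset ι} {D : ι → Finset α}
    (h : (s : Set ι).Pairwise fun i j => ∀ a ∈ D i, ∀ b ∈ D j, ¬ a ≤ b) :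
    chainEulerChar (s.biUnion D) = ∑ i ∈ s, chainEulerChar (D i) := by
  have hsame : ∀ i ∈ s, ∀ j ∈ s, ∀ a ∈ D i, ∀ b ∈ D j, (a ≤ b ∨ b ≤ a) → i = j :=
    fun i hi j hj a ha b hb hab => by_contra fun hij =>
      hab.elim (h hi hj hij a ha b hb) (h hj hi (Ne.symm hij) b hb a ha)
  have hchains : {σ ∈ (s.biUnion D).chains | σ.Nonempty} =
      s.biUnion fun i => {σ ∈ (D i).chains | σ.Nonempty} := by
    ext σ
    simp only [mem_filter, mem_chains, mem_biUnion]
    constructor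
    · rintro ⟨⟨hsub, hchain⟩, a, ha⟩
      obtain ⟨i, hi, hai⟩ := mem_biUnion.1 (hsub ha)
      refine ⟨i, hi, ⟨fun b hb => ?_, hchain⟩, a, ha⟩
      obtain ⟨j, hj, hbj⟩ := mem_biUnion.1 (hsub hb)
      exact hsame i hi j hj a hai b hbj (hchain.total ha hb) ▸ hbj
    · rintro ⟨i, hi, ⟨hsub, hchain⟩, hne⟩
      exact ⟨⟨hsub.trans (subset_biUnion_of_mem D hi), hchain⟩, hne⟩
  rw [chainEulerChar, hchains, sum_biUnion]
  · rfl
  · intro i hi j hj hij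
    refine disjoint_left.2 fun σ hσi hσj => ?_
    simp only [mem_filter, mem_chains] at hσi hσj
    obtain ⟨a, ha⟩ := hσi.2
    exact hij (hsame i hi j hj a (hσi.1.1 ha) a (hσj.1.1 ha) (Or.inl le_rfl))

theorem chainEulerChar_eq_sum_one_sub (D : Finset α) :
    chainEulerChar D = ∑ a ∈ D, (1 - chainEulerChar {b ∈ D | a < b}) := by
  simp_rw [← sum_chains_neg_one_pow, sum_sigma', chainEulerChar]
  symm
  -- a nonempty chain is its least element `a` together with a chain above `a`
  refine sum_bij (fun x _ => insert x.1 x.2) ?_ ?_ ?_ ?_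
  · rintro ⟨a, τ⟩ h
    simp only [mem_sigma, mem_filter, mem_chains, subset_iff] at h ⊢
    obtain ⟨ha, hτ, hchain⟩ := h
    refine ⟨⟨insert_subset ha fun b hb => (hτ hb).1, ?_⟩, insert_nonempty a τ⟩
    rw [coe_insert]
    exact hchain.insert fun b hb _ => Or.inl (hτ hb).2.le
  · rintro ⟨a, τ⟩ h ⟨a', τ'⟩ h' he
    simp only [mem_sigma, mem_filter, mem_chains, subset_iff] at h h' he
    have hle : ∀ {a : α} {τ : Finset α}, (∀ ⦃b⦄, b ∈ τ → b ∈ D ∧ a < b) →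
        ∀ b ∈ insert a τ, a ≤ b :=
      fun hτ b hb => (mem_insert.1 hb).elim (fun h => h.ge) fun hb => (hτ hb).2.le
    obtain rfl : a = a' := le_antisymm (hle h.2.1 a' (he ▸ mem_insert_self _ _))
      (hle h'.2.1 a (he.symm ▸ mem_insert_self _ _))
    have hnot : ∀ {τ : Finset α}, (∀ ⦃b⦄, b ∈ τ → b ∈ D ∧ a < b) → a ∉ τ :=
      fun hτ ha => lt_irrefl a (hτ ha).2
    rw [← erase_insert (hnot h.2.1), he, erase_insert (hnot h'.2.1)]
  · intro σ hσ
    simp only [mem_filter, mem_chains] at hσ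
    obtain ⟨⟨hsub, hchain⟩, hne⟩ := hσ
    obtain ⟨a, ha, hleast⟩ := exists_isLeast_of_isChain hne hchain
    refine ⟨⟨a, σ.erase a⟩, ?_, insert_erase ha⟩
    simp only [mem_sigma, mem_chains]
    refine ⟨hsub ha, fun b hb => ?_, hchain.mono (by simp)⟩
    obtain ⟨hba, hb⟩ := mem_erase.1 hb
    exact mem_filter.2 ⟨hsub hb, lt_of_le_of_ne (hleast hb) (Ne.symm hba)⟩
  · rintro ⟨a, τ⟩ h
    simp only [mem_sigma, mem_chains, subset_iff, mem_filter] at h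
    have ha : a ∉ τ := fun ha => lt_irrefl a (h.2.1 ha).2
    rw [card_insert_of_notMem ha, pow_succ, pow_succ]; ring

end Finset

theorem posetEulerChar_eq_chainEulerChar_univ (P : Type*) [PartialOrder P] [Fintype P] :
    posetEulerChar P = (univ : Finset P).chainEulerChar := by
  rw [chainEulerChar, chains, filter_filter, sum_filter, posetEulerChar]
  refine sum_congr (by congr!) fun σ _ => ?_
  simp only [and_comm]

section Group
variable {G : Type*} [Group G] {p : ℕ}

theorem rightCoset_subset_rightCoset_iff {H K : Subgroup G} {x y : G} :
    op x • (H : Set G) ⊆ op y • (K : Set G) ↔ H ≤ K ∧ x * y⁻¹ ∈ K := by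
  constructor
  · intro hsub
    have hx : x * y⁻¹ ∈ K := (mem_rightCoset_iff y).1 (hsub (mem_own_rightCoset _ x))
    refine ⟨fun h hh => ?_, hx⟩
    have hhx : h * x * y⁻¹ ∈ K := (mem_rightCoset_iff y).1 (hsub (mem_rightCoset x hh))
    simpa [mul_assoc] using K.mul_mem hhx (K.inv_mem hx)
  · rintro ⟨hHK, hx⟩ z hz
    rw [mem_rightCoset_iff] at hz ⊢
    simpa [mul_assoc] using K.mul_mem (hHK hz) hx

theorem Sylow.index_eq_ordCompl [Finite G] [hp : Fact p.Prime] (Q : Sylow p G) :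
    (Q : Subgroup G).index = ordCompl[p] (Nat.card G) := by
  have h := (Q : Subgroup G).card_mul_index
  rw [Q.card_eq_multiplicity] at h
  exact Nat.eq_div_of_mul_eq_right (pow_pos hp.out.pos _).ne' h

theorem IsPTIGroup.sylow_eq_of_le [Finite G] [Fact p.Prime] (hTI : IsPTIGroup p G)
    {H : Subgroup G} (hH : H ≠ ⊥) {P Q : Sylow p G} (hP : H ≤ P) (hQ : H ≤ Q) : P = Q := by
  obtain ⟨g, rfl⟩ := MulAction.exists_smul_eq G P Q
  refine (hTI P g).elim (fun h => absurd (eq_bot_iff.2 ?_) hH) fun h => (Sylow.ext h).symm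
  exact (le_inf hP hQ).trans h.le

theorem IsPTIGroup.card_sylow_ge_eq_one [Fintype G] [Fact p.Prime] (hTI : IsPTIGroup p G)
    {H : Subgroup G} (hH : IsPGroup p H) (hne : H ≠ ⊥) : #{Q : Sylow p G | H ≤ Q} = 1 := by
  obtain ⟨Q, hQ⟩ := hH.exists_le_sylow
  refine card_eq_one.2 ⟨Q, eq_singleton_iff_unique_mem.2 ⟨by simpa using hQ, fun Q' hQ' => ?_⟩⟩
  exact hTI.sylow_eq_of_le hne (by simpa using hQ') hQ

namespace pCosets

theorem mem_iff {S : Set G} :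
    S ∈ pCosets p G ↔ ∃ (H : Subgroup G) (x : G), IsPGroup p H ∧ S = op x • (H : Set G) :=
  Iff.rfl

noncomputable def subgroup (c : pCosets p G) : Subgroup G := (mem_iff.1 c.2).choose

theorem isPGroup_subgroup (c : pCosets p G) : IsPGroup p (subgroup c) :=
  (mem_iff.1 c.2).choose_spec.choose_spec.1

theorem exists_eq_rightCoset (c : pCosets p G) :
    ∃ x : G, (c : Set G) = op x • (subgroup c : Set G) :=
  (mem_iff.1 c.2).choose_spec.imp fun _ hx => hx.2

theorem nonempty (c : pCosets p G) : (c : Set G).Nonempty := by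
  obtain ⟨x, hx⟩ := exists_eq_rightCoset c
  exact ⟨x, hx ▸ mem_own_rightCoset _ x⟩

theorem coe_eq_rightCoset (c : pCosets p G) {x : G} (hx : x ∈ (c : Set G)) :
    (c : Set G) = op x • (subgroup c : Set G) := by
  obtain ⟨y, hy⟩ := exists_eq_rightCoset c
  rw [hy, rightCoset_eq_iff]
  exact (mem_rightCoset_iff y).1 (hy ▸ hx)

def mk {H : Subgroup G} (hH : IsPGroup p H) (x : G) : pCosets p G :=
  ⟨op x • (H : Set G), H, x, hH, rfl⟩

theorem subgroup_mk {H : Subgroup G} (hH : IsPGroup p H) (x : G) :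
    subgroup (pCosets.mk hH x) = H := by
  have h := coe_eq_rightCoset (pCosets.mk hH x) (mem_own_rightCoset _ x)
  exact le_antisymm (rightCoset_subset_rightCoset_iff.1 h.ge).1
    (rightCoset_subset_rightCoset_iff.1 h.le).1

theorem le_iff {c d : pCosets p G} {x : G} (hx : x ∈ (c : Set G)) :
    c ≤ d ↔ subgroup c ≤ subgroup d ∧ x ∈ (d : Set G) := by
  constructor
  · intro h
    have hxd := h hx
    have hsub : op x • (subgroup c : Set G) ⊆ op x • (subgroup d : Set G) := by
      rw [← coe_eq_rightCoset c hx, ← coe_eq_rightCoset d hxd]; exact h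
    exact ⟨(rightCoset_subset_rightCoset_iff.1 hsub).1, hxd⟩
  · rintro ⟨hle, hxd⟩
    change (c : Set G) ⊆ d
    rw [coe_eq_rightCoset c hx, coe_eq_rightCoset d hxd]
    exact rightCoset_subset_rightCoset_iff.2 ⟨hle, by simp⟩

theorem eq_of_le_of_subgroup_le {c d : pCosets p G} (h : c ≤ d)
    (hsub : subgroup d ≤ subgroup c) : c = d := by
  obtain ⟨x, hx⟩ := nonempty c
  exact le_antisymm h ((le_iff (h hx)).2 ⟨hsub, hx⟩)

theorem subgroup_ne_bot_of_lt {c d : pCosets p G} (h : c < d) : subgroup d ≠ ⊥ :=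
  fun hbot => h.ne (eq_of_le_of_subgroup_le h.le (hbot ▸ bot_le))

theorem card_subgroup_eq [Fintype G] {H : Subgroup G} (hH : IsPGroup p H) :
    #{c : pCosets p G | subgroup c = H} = H.index := by
  rw [← Fintype.card_subtype, ← Nat.card_eq_fintype_card, H.index_eq_card,
    ← Nat.card_congr (QuotientGroup.quotientRightRelEquivQuotientLeftRel H)]
  symm
  refine Nat.card_congr (Equiv.ofBijective (Quotient.lift
    (fun x => ⟨pCosets.mk hH x, subgroup_mk hH x⟩) fun x y hxy => ?_) ⟨?_, ?_⟩)
  · exact Subtype.ext (Subtype.ext ((rightCoset_eq_iff H).2 (QuotientGroup.rightRel_apply.1 hxy)))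
  · refine Quotient.ind₂ fun x y hxy => Quotient.sound (QuotientGroup.rightRel_apply.2 ?_)
    exact (rightCoset_eq_iff H).1 (congrArg Subtype.val (congrArg Subtype.val hxy))
  · rintro ⟨c, hc⟩
    obtain ⟨x, hx⟩ := nonempty c
    refine ⟨Quotient.mk _ x, Subtype.ext (Subtype.ext ?_)⟩
    rw [coe_eq_rightCoset c hx, hc]
    rfl

theorem sum_card_sylow_eq_subgroup [Fintype G] [Fact p.Prime] :
    ∑ c : pCosets p G, (#{Q : Sylow p G | subgroup c = Q} : ℤ) =
      (Nat.card (Sylow p G) : ℤ) * (ordCompl[p] (Nat.card G) : ℕ) := by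
  have hswap : ∑ c : pCosets p G, #{Q : Sylow p G | subgroup c = Q} =
      ∑ Q : Sylow p G, #{c : pCosets p G | subgroup c = Q} := by
    simp only [card_filter]; exact sum_comm
  simp_rw [← Nat.cast_sum, hswap, card_subgroup_eq (Sylow.isPGroup' _), Sylow.index_eq_ordCompl,
    sum_const, card_univ, smul_eq_mul, Nat.card_eq_fintype_card]
  push_cast; ring

theorem chainEulerChar_filter_lt [Fintype G] [Fact p.Prime] (hTI : IsPTIGroup p G)
    (c : pCosets p G) : chainEulerChar {d | c < d} = #{Q : Sylow p G | subgroup c < Q} := by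
  obtain ⟨x, hx⟩ := nonempty c
  let top (Q : Sylow p G) : pCosets p G := pCosets.mk Q.isPGroup' x
  have hle_top {d : pCosets p G} {Q : Sylow p G} (hcd : c ≤ d) :
      d ≤ top Q ↔ subgroup d ≤ Q := by
    rw [le_iff (hcd hx), subgroup_mk]
    exact and_iff_left (mem_own_rightCoset _ x)
  have hcover : ({d | c < d} : Finset (pCosets p G)) =
      ({Q : Sylow p G | subgroup c < Q} : Finset _).biUnion fun Q => {d | c < d ∧ d ≤ top Q} := by
    ext d
    simp only [mem_filter, mem_univ, true_and, mem_biUnion]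
    refine ⟨fun hcd => ?_, fun ⟨_, _, hcd, _⟩ => hcd⟩
    obtain ⟨Q, hdQ⟩ := (isPGroup_subgroup d).exists_le_sylow
    have hcQ : subgroup c ≤ Q := ((le_iff hx).1 hcd.le).1.trans hdQ
    refine ⟨Q, hcQ.lt_of_ne fun hQ => hcd.ne ?_, hcd, (hle_top hcd.le).2 hdQ⟩
    exact eq_of_le_of_subgroup_le hcd.le (hQ ▸ hdQ)
  rw [hcover, chainEulerChar_biUnion, card_eq_sum_ones, Nat.cast_sum]
  · refine sum_congr rfl fun Q hQ => chainEulerChar_eq_one_of_isGreatest (t := top Q) ⟨?_, ?_⟩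
    · replace hQ : subgroup c < Q := (mem_filter.1 hQ).2
      have hc_top : c ≤ top Q :=
        (le_iff hx).2 ⟨(subgroup_mk Q.isPGroup' x).symm ▸ hQ.le, mem_own_rightCoset _ x⟩
      have hc_ne : c ≠ top Q := ne_of_apply_ne subgroup ((subgroup_mk Q.isPGroup' x).symm ▸ hQ.ne)
      simpa using hc_top.lt_of_ne hc_ne
    · intro d hd
      exact (mem_filter.1 hd).2.2
  · intro Q _ Q' _ hne a ha b hb hab
    simp only [mem_filter, mem_univ, true_and] at ha hb
    refine hne (hTI.sylow_eq_of_le (subgroup_ne_bot_of_lt ha.1) ?_ ?_)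
    · exact (hle_top ha.1.le).1 ha.2
    · exact (hle_top ha.1.le).1 (hab.trans hb.2)

theorem sum_one_sub_card_sylow_gt [Fintype G] [Fact p.Prime] (hTI : IsPTIGroup p G) :
    ∑ c : pCosets p G, (1 - #{Q : Sylow p G | subgroup c < Q} : ℤ) =
      (Nat.card (Sylow p G) : ℤ) * (ordCompl[p] (Nat.card G) : ℕ) +
        (1 - (Nat.card (Sylow p G) : ℤ)) * Nat.card G := by
  have hlt (H : Subgroup G) :
      (#{Q : Sylow p G | H < Q} : ℤ) = #{Q : Sylow p G | H ≤ Q} - #{Q : Sylow p G | H = Q} := by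
    have hsplit : ({Q : Sylow p G | H ≤ Q} : Finset _) =
        ({Q | H < Q} : Finset (Sylow p G)) ∪ ({Q | H = Q} : Finset (Sylow p G)) := by
      ext Q; simp [le_iff_lt_or_eq]
    rw [hsplit, card_union_of_disjoint (disjoint_filter.2 fun Q _ h1 h2 => h1.ne h2)]
    push_cast; ring
  have hge (c : pCosets p G) : (1 - #{Q : Sylow p G | subgroup c ≤ Q} : ℤ) =
      if subgroup c = ⊥ then 1 - (Nat.card (Sylow p G) : ℤ) else 0 := by
    split_ifs with h
    · simp [h, Nat.card_eq_fintype_card]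
    · rw [hTI.card_sylow_ge_eq_one (isPGroup_subgroup c) h]; simp
  calc ∑ c : pCosets p G, (1 - #{Q : Sylow p G | subgroup c < Q} : ℤ)
      = ∑ c : pCosets p G, ((1 - #{Q : Sylow p G | subgroup c ≤ Q} : ℤ) +
          #{Q : Sylow p G | subgroup c = Q}) := by
        simp_rw [hlt]; ring_nf
    _ = #{c : pCosets p G | subgroup c = ⊥} * (1 - (Nat.card (Sylow p G) : ℤ)) +
          (Nat.card (Sylow p G) : ℤ) * (ordCompl[p] (Nat.card G) : ℕ) := by
        rw [sum_add_distrib, sum_card_sylow_eq_subgroup]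
        simp_rw [hge]
        rw [sum_ite, sum_const_zero, add_zero, sum_const, nsmul_eq_mul]
    _ = _ := by
        rw [card_subgroup_eq IsPGroup.of_bot, Subgroup.index_bot]; ring

end pCosets

end Group

/-- If `G` is a finite `p`-TI-group with `s` Sylow `p`-subgroups, then
`χ(C_p(G)) = s·|G|_{p'} - (s - 1)·|G|`. -/
theorem euler_char_pCosets_of_pTI {G : Type*} [Group G] [Fintype G] {p : ℕ}
    (hp : p.Prime) (hTI : IsPTIGroup p G) :
    posetEulerChar ↥(pCosets p G) =
      (Nat.card (Sylow p G) : ℤ) * ((ordCompl[p] (Fintype.card G) : ℕ) : ℤ) -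
        ((Nat.card (Sylow p G) : ℤ) - 1) * (Fintype.card G : ℤ) := by
  have : Fact p.Prime := ⟨hp⟩
  rw [posetEulerChar_eq_chainEulerChar_univ, chainEulerChar_eq_sum_one_sub]
  simp_rw [pCosets.chainEulerChar_filter_lt hTI]
  rw [pCosets.sum_one_sub_card_sylow_gt hTI, Nat.card_eq_fintype_card (α := G)]
  ring
end
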